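/- Let A be a commutative Banach algebra and let B be an abstract Segal algebra with respect to A possessing an approximate identity (e_α). Let φ: B → B be a continuous algebra homomorphism admitting a continuous extension φ̃: A → A. If A is (φ̃,φ̃)-weakly amenable, then B is (φ,φ)-weakly amenable; in fact every continuous (φ,φ)-derivation D: B → B* is zero. -/

import Mathlib

/-!
As `A` is commutative and `j` injective, `B` is commutative, so every inner
`(φ̃,φ̃)`-derivation of `A` vanishes. Fix `a, b ∈ B`. Since `B` is an ideal of `A`, the maps
`c ↦ c a` and `u ↦ u b` send `A` into `B`, continuously by the closed graph theorem, and
`d c u = D (c a) (u b) - D a (φ̃ c u b)` is a continuous bilinear form on `A`. On `B` it is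
`d p u = D p (φ a · u b)`, which the derivation rule for `D` shows to be a
`(φ̃,φ̃)`-derivation; by density so is `d`, hence `d = 0`. Thus `D p (φ a · c b) = 0`, the
approximate identity removes `c`, so `D` vanishes on products, and using it once more `D = 0`.
-/

open Filter Topology

theorem ContinuousLinearMap.exists_comp_eq_of_injective
    {𝕜 E F G : Type*} [NontriviallyNormedField 𝕜]
    [NormedAddCommGroup E] [NormedSpace 𝕜 E] [CompleteSpace E]
    [NormedAddCommGroup F] [NormedSpace 𝕜 F]
    [NormedAddCommGroup G] [NormedSpace 𝕜 G] [CompleteSpace G]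
    (j : G →L[𝕜] F) (hj : Function.Injective j) (T : E →L[𝕜] F)
    (hT : ∀ x, ∃ y, j y = T x) : ∃ S : E →L[𝕜] G, ∀ x, j (S x) = T x := by
  choose σ hσ using hT
  let S : E →ₗ[𝕜] G :=
    { toFun := σ
      map_add' := fun x y => hj (by simp only [hσ, map_add])
      map_smul' := fun c x => hj (by simp only [hσ, map_smul, RingHom.id_apply]) }
  refine ⟨⟨S, S.continuous_of_seq_closed_graph fun u x y hu hSu => hj ?_⟩, hσ⟩
  have hjSu : Tendsto (fun n => T (u n)) atTop (𝓝 (j y)) := by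
    simpa [Function.comp_def, S, hσ] using (j.continuous.tendsto y).comp hSu
  exact (tendsto_nhds_unique hjSu ((T.continuous.tendsto x).comp hu)).trans (hσ x).symm

-- A `(φ,φ)`-derivation `A → (A_{(φ,φ)})*`, written as the bilinear form `d a x = ⟨d a, x⟩`.
def IsTwistedDerivation {𝕜 A : Type*} [NontriviallyNormedField 𝕜] [NormedRing A]
    [NormedAlgebra 𝕜 A] (φ : A →L[𝕜] A) (d : A →L[𝕜] A →L[𝕜] 𝕜) : Prop :=
  ∀ a b x, d (a * b) x = d a (φ b * x) + d b (x * φ a)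

theorem IsTwistedDerivation.of_denseRange
    {𝕜 A E : Type*} [NontriviallyNormedField 𝕜] [NormedRing A] [NormedAlgebra 𝕜 A]
    [TopologicalSpace E] {j : E → A} (hj : DenseRange j) {φ : A →L[𝕜] A}
    {d : A →L[𝕜] A →L[𝕜] 𝕜}
    (h : ∀ p q x, d (j p * j q) x = d (j p) (φ (j q) * x) + d (j q) (x * φ (j p))) :
    IsTwistedDerivation φ d := by
  intro a b x
  have := Continuous.ext_on (hj.prodMap hj)
    (f := fun ab : A × A => d (ab.1 * ab.2) x)
    (g := fun ab : A × A => d ab.1 (φ ab.2 * x) + d ab.2 (x * φ ab.1)) (by fun_prop) (by fun_prop)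
    (by rintro _ ⟨⟨p, q⟩, rfl⟩; exact h p q x)
  exact congrFun this (a, b)

theorem eq_zero_of_forall_mul_eq_zero
    {𝕜 B X : Type*} [NontriviallyNormedField 𝕜] [NormedAddCommGroup B] [NormedSpace 𝕜 B]
    [TopologicalSpace X] [T2Space X] [Zero X]
    {mulB : B →L[𝕜] B →L[𝕜] B} {κ : Type*} {F : Filter κ} [F.NeBot] {e : κ → B}
    (hae : ∀ b, Tendsto (fun α => mulB (e α) b) F (𝓝 b))
    {f : B → X} (hf : Continuous f) (h : ∀ c b, f (mulB c b) = 0) (b : B) : f b = 0 :=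
  tendsto_nhds_unique ((hf.tendsto b).comp (hae b)) (by simp [Function.comp_def, h])

section SegalAlgebra

variable {𝕜 A B : Type*} [NontriviallyNormedField 𝕜]
  [NormedCommRing A] [NormedAlgebra 𝕜 A] [NormedAddCommGroup B] [NormedSpace 𝕜 B]
  {mulB : B →L[𝕜] B →L[𝕜] B} {j : B →L[𝕜] A}

theorem mul_comm_of_injective (hjinj : Function.Injective j)
    (hjmul : ∀ a b, j (mulB a b) = j a * j b) (a b : B) : mulB a b = mulB b a :=
  hjinj (by rw [hjmul, hjmul, mul_comm])

variable [CompleteSpace A] [CompleteSpace B]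

theorem exists_mul_right_lift (hjinj : Function.Injective j)
    (hjmul : ∀ a b, j (mulB a b) = j a * j b) (hjideal : ∀ (a : A) (b : B), ∃ c, j c = a * j b)
    (b : B) :
    ∃ R : A →L[𝕜] B, (∀ p, R (j p) = mulB p b) ∧ ∀ p u, R (j p * u) = mulB p (R u) := by
  obtain ⟨R, hR⟩ := (j.exists_comp_eq_of_injective hjinj
    ((ContinuousLinearMap.mul 𝕜 A).flip (j b)) (hjideal · b))
  simp only [ContinuousLinearMap.flip_apply, ContinuousLinearMap.mul_apply'] at hR
  exact ⟨R, fun p => hjinj (by rw [hR, hjmul]), fun p u => hjinj (by rw [hR, hjmul, hR, mul_assoc])⟩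

theorem twistedDerivation_apply_mul_mul_eq_zero
    (hassoc : ∀ a b c : B, mulB (mulB a b) c = mulB a (mulB b c))
    (hjinj : Function.Injective j) (hjmul : ∀ a b, j (mulB a b) = j a * j b)
    (hjdense : DenseRange j) (hjideal : ∀ (a : A) (b : B), ∃ c, j c = a * j b)
    {φ : B →L[𝕜] B} {φt : A →L[𝕜] A} (hext : ∀ b, φt (j b) = j (φ b))
    (hWA : ∀ d : A →L[𝕜] A →L[𝕜] 𝕜, IsTwistedDerivation φt d →
      ∃ ξ : A →L[𝕜] 𝕜, ∀ a x, d a x = ξ (φt a * x) - ξ (x * φt a))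
    {D : B →L[𝕜] B →L[𝕜] 𝕜}
    (hD : ∀ a b x, D (mulB a b) x = D a (mulB (φ b) x) + D b (mulB x (φ a)))
    (p a c b : B) : D p (mulB (φ a) (mulB c b)) = 0 := by
  have hcomm := mul_comm_of_injective hjinj hjmul
  have hswap : ∀ x y z, mulB x (mulB y z) = mulB y (mulB x z) := fun x y z => by
    rw [← hassoc, hcomm x y, hassoc]
  obtain ⟨Ra, hRa, -⟩ := exists_mul_right_lift hjinj hjmul hjideal a
  obtain ⟨Rb, hRb, hRb_mul⟩ := exists_mul_right_lift hjinj hjmul hjideal b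
  let d : A →L[𝕜] A →L[𝕜] 𝕜 := D.bilinearComp Ra Rb -
    (ContinuousLinearMap.compL 𝕜 A A 𝕜 ((D a).comp Rb)).comp
      ((ContinuousLinearMap.mul 𝕜 A).comp φt)
  have hdj : ∀ p u, d (j p) u = D p (mulB (φ a) (Rb u)) := by
    intro p u
    simp only [d, sub_apply, ContinuousLinearMap.bilinearComp_apply,
      ContinuousLinearMap.comp_apply, ContinuousLinearMap.compL_apply,
      ContinuousLinearMap.mul_apply', hRa, hext, hRb_mul, hD, hcomm (Rb u)]
    ring
  have hder : IsTwistedDerivation φt d := IsTwistedDerivation.of_denseRange hjdense fun p q u => by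
    rw [← hjmul, hdj, hdj, hdj, hext, hext, mul_comm u, hRb_mul, hRb_mul, hD,
      hswap (φ q), hcomm _ (φ p), hswap (φ p)]
  obtain ⟨ξ, hξ⟩ := hWA d hder
  rw [← hRb, ← hdj, hξ, mul_comm, sub_self]

end SegalAlgebra

theorem stmt10_general
    {A : Type*} [NormedCommRing A] [NormedAlgebra ℂ A] [CompleteSpace A]
    {B : Type*} [NormedAddCommGroup B] [NormedSpace ℂ B] [CompleteSpace B]
    -- the (continuous, associative) product of the Banach algebra `B`
    (mulB : B →L[ℂ] B →L[ℂ] B)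
    (hassoc : ∀ a b c : B, mulB (mulB a b) c = mulB a (mulB b c))
    -- `B` is (identified via `j` with) a dense left ideal of `A`
    (j : B →L[ℂ] A)
    (hjinj : Function.Injective j)
    (hjmul : ∀ a b : B, j (mulB a b) = j a * j b)
    (hjdense : DenseRange j)
    (hjideal : ∀ (a : A) (b : B), ∃ c : B, j c = a * j b)
    -- `B` has an approximate identity `(e_α)`
    (κ : Type*) (F : Filter κ) (hF : F.NeBot) (e : κ → B)
    (hae : ∀ b : B, Filter.Tendsto (fun α => mulB (e α) b) F (nhds b))
    -- `φ` is a continuous algebra homomorphism on `B` with continuous extension `φ̃` on `A`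
    (φ : B →L[ℂ] B)
    (φt : A →L[ℂ] A)
    (hext : ∀ b : B, φt (j b) = j (φ b))
    -- `A` is `(φ̃,φ̃)`-weakly amenable
    (hWA : ∀ d : A →L[ℂ] A →L[ℂ] ℂ,
      (∀ a b x : A, d (a * b) x = d a (φt b * x) + d b (x * φt a)) →
      ∃ ξ : A →L[ℂ] ℂ, ∀ a x : A, d a x = ξ (φt a * x) - ξ (x * φt a)) :
    -- then `B` is `(φ,φ)`-weakly amenable: in fact every continuous
    -- `(φ,φ)`-derivation `D : B → B*` is zero (hence in particular inner)
    ∀ D : B →L[ℂ] B →L[ℂ] ℂ,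
      (∀ a b x : B, D (mulB a b) x = D a (mulB (φ b) x) + D b (mulB x (φ a))) →
      (∃ ξ : B →L[ℂ] ℂ, ∀ a x : B, D a x = ξ (mulB (φ a) x) - ξ (mulB x (φ a))) ∧
      D = 0 := by
  intro D hD
  have hDφ : ∀ p a x, D p (mulB (φ a) x) = 0 := fun p a =>
    eq_zero_of_forall_mul_eq_zero hae ((D p).comp (mulB (φ a))).continuous
      (twistedDerivation_apply_mul_mul_eq_zero hassoc hjinj hjmul hjdense hjideal hext hWA hD p a)
  have hDmul : ∀ p q, D (mulB p q) = 0 := fun p q => by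
    ext x
    rw [hD, mul_comm_of_injective hjinj hjmul x, hDφ, hDφ, add_zero, zero_apply]
  have hD0 : D = 0 := ContinuousLinearMap.ext (eq_zero_of_forall_mul_eq_zero hae D.continuous hDmul)
  exact ⟨⟨0, fun a x => by simp [hD0]⟩, hD0⟩

theorem stmt10
    {A : Type*} [NormedCommRing A] [NormedAlgebra ℂ A] [CompleteSpace A]
    {B : Type*} [NormedAddCommGroup B] [NormedSpace ℂ B] [CompleteSpace B]
    -- the (continuous, associative) product of the Banach algebra `B`
    (mulB : B →L[ℂ] B →L[ℂ] B)
    (hassoc : ∀ a b c : B, mulB (mulB a b) c = mulB a (mulB b c))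
    -- `B` is (identified via `j` with) a dense left ideal of `A`
    (j : B →L[ℂ] A)
    (hjinj : Function.Injective j)
    (hjmul : ∀ a b : B, j (mulB a b) = j a * j b)
    (hjdense : DenseRange j)
    (hjideal : ∀ (a : A) (b : B), ∃ c : B, j c = a * j b)
    -- `B` has an approximate identity `(e_α)`
    (κ : Type*) (F : Filter κ) (hF : F.NeBot) (e : κ → B)
    (hae : ∀ b : B, Filter.Tendsto (fun α => mulB (e α) b) F (nhds b))
    -- `φ` is a continuous algebra homomorphism on `B` with continuous extension `φ̃` on `A`
    (φ : B →L[ℂ] B)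
    (hφ : ∀ a b : B, φ (mulB a b) = mulB (φ a) (φ b))
    (φt : A →L[ℂ] A)
    (hφt : ∀ a b : A, φt (a * b) = φt a * φt b)
    (hext : ∀ b : B, φt (j b) = j (φ b))
    -- `A` is `(φ̃,φ̃)`-weakly amenable
    (hWA : ∀ d : A →L[ℂ] A →L[ℂ] ℂ,
      (∀ a b x : A, d (a * b) x = d a (φt b * x) + d b (x * φt a)) →
      ∃ ξ : A →L[ℂ] ℂ, ∀ a x : A, d a x = ξ (φt a * x) - ξ (x * φt a)) :
    -- then `B` is `(φ,φ)`-weakly amenable: in fact every continuous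
    -- `(φ,φ)`-derivation `D : B → B*` is zero (hence in particular inner)
    ∀ D : B →L[ℂ] B →L[ℂ] ℂ,
      (∀ a b x : B, D (mulB a b) x = D a (mulB (φ b) x) + D b (mulB x (φ a))) →
      (∃ ξ : B →L[ℂ] ℂ, ∀ a x : B, D a x = ξ (mulB (φ a) x) - ξ (mulB x (φ a))) ∧
      D = 0 :=
  stmt10_general mulB hassoc j hjinj hjmul hjdense hjideal κ F hF e hae φ φt hext hWA
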